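/- Let g1 and g2 be finite (possibly disconnected) attributed graphs, each with at most N nodes, and let x be a node of g1 and y a node of g2. Then the infinite unfolding trees of x and y are equal if and only if their unfolding trees of depth 2N - 1 are equal. -/
import Mathlib


/-- Attributed unfolding trees of depth `d`. -/
def UT (A : Type) : ℕ → Type
  | 0 => A
  | d+1 => A × Multiset (A × UT A d)

/-- A finite attributed undirected graph on node type `V`. -/
structure FinGraph (V A : Type) where
  nbr : V → Finset V
  attr : V → A
  eattr : V → V → A

def FinGraph.Undirected {V A : Type} (g : FinGraph V A) : Prop :=
  (∀ u v, u ∈ g.nbr v ↔ v ∈ g.nbr u) ∧ (∀ u v, g.eattr u v = g.eattr v u)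

/-- Depth-`d` unfolding tree of node `v`. -/
def FinGraph.ut {V A : Type} (g : FinGraph V A) : (d : ℕ) → V → UT A d
  | 0, v => g.attr v
  | d+1, v => (g.attr v, (g.nbr v).val.map fun u => (g.eattr v u, g.ut d u))

/-- 1-WL color refinement with hash functions `h0` and `h`. -/
def FinGraph.wl {V A C : Type} (g : FinGraph V A)
    (h0 : A → C) (h : C × Multiset (A × C) → C) : ℕ → V → C
  | 0, v => h0 (g.attr v)
  | j+1, v => h (g.wl h0 h j v, (g.nbr v).val.map fun u => (g.eattr v u, g.wl h0 h j u))

namespace UTAux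

variable {V A : Type}

/-- Truncation of an unfolding tree by one level. -/
def trunc : (d : ℕ) → UT A (d+1) → UT A d
  | 0, t => t.1
  | d+1, t => (t.1, t.2.map fun p => (p.1, trunc d p.2))

lemma trunc_ut (g : FinGraph V A) : ∀ (d : ℕ) (v : V), trunc d (g.ut (d+1) v) = g.ut d v := by
  intro d
  induction d with
  | zero => intro v; rfl
  | succ d ih =>
      intro v
      show (g.attr v, Multiset.map _ (Multiset.map _ (g.nbr v).val)) = _
      rw [Multiset.map_map]
      refine congrArg (Prod.mk _) (Multiset.map_congr rfl ?_)
      intro w _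
      simp [Function.comp, ih w]

lemma ut_mono (g : FinGraph V A) {u v : V} :
    ∀ {d k : ℕ}, k ≤ d → g.ut d u = g.ut d v → g.ut k u = g.ut k v := by
  intro d
  induction d with
  | zero =>
      intro k hk h
      obtain rfl : k = 0 := Nat.le_zero.mp hk
      exact h
  | succ d ih =>
      intro k hk h
      rcases Nat.eq_or_lt_of_le hk with rfl | hlt
      · exact h
      · exact ih (Nat.lt_succ_iff.mp hlt) (by rw [← trunc_ut g d u, ← trunc_ut g d v, h])

/-- One-step stability propagates. -/
lemma step_stable (g : FinGraph V A) (d : ℕ)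
    (H : ∀ u v : V, g.ut d u = g.ut d v → g.ut (d+1) u = g.ut (d+1) v) :
    ∀ k, ∀ u v : V, g.ut (d+k) u = g.ut (d+k) v → g.ut (d+k+1) u = g.ut (d+k+1) v := by
  intro k
  induction k with
  | zero => exact H
  | succ k ih =>
      intro u v h
      have h1 : g.attr u = g.attr v := congrArg Prod.fst h
      have h2 : Multiset.map (fun w => (g.eattr u w, g.ut (d+k) w)) (g.nbr u).val
          = Multiset.map (fun w => (g.eattr v w, g.ut (d+k) w)) (g.nbr v).val :=
        congrArg Prod.snd h
      have hrel := Multiset.rel_map.mp (Multiset.rel_eq.mpr h2)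
      have hrel2 : Multiset.Rel (fun a b => (g.eattr u a, g.ut (d+k+1) a)
          = (g.eattr v b, g.ut (d+k+1) b)) (g.nbr u).val (g.nbr v).val := by
        refine hrel.mono ?_
        intro a _ b _ hab
        have he : g.eattr u a = g.eattr v b := congrArg Prod.fst hab
        have hu : g.ut (d+k) a = g.ut (d+k) b := congrArg Prod.snd hab
        rw [he, ih a b hu]
      have h2' := Multiset.rel_eq.mp (Multiset.rel_map.mpr hrel2)
      show (g.attr u, Multiset.map (fun w => (g.eattr u w, g.ut (d+k+1) w)) (g.nbr u).val)
          = (g.attr v, Multiset.map (fun w => (g.eattr v w, g.ut (d+k+1) w)) (g.nbr v).val)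
      rw [h1, h2']

open Classical in
/-- Number of distinct depth-`d` unfolding trees. -/
noncomputable def nimg [Fintype V] (g : FinGraph V A) (d : ℕ) : ℕ :=
  (Finset.univ.image (g.ut d)).card

open Classical in
lemma nimg_le_card [Fintype V] (g : FinGraph V A) (d : ℕ) :
    nimg g d ≤ Fintype.card V := by
  classical
  exact (Finset.card_image_le).trans_eq Finset.card_univ

open Classical in
lemma image_trunc [Fintype V] (g : FinGraph V A) (d : ℕ) :
    (Finset.univ.image (g.ut (d+1))).image (trunc d) = Finset.univ.image (g.ut d) := by
  classical
  rw [Finset.image_image]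
  refine Finset.image_congr ?_
  intro v _
  exact trunc_ut g d v

open Classical in
lemma nimg_mono [Fintype V] (g : FinGraph V A) (d : ℕ) :
    nimg g d ≤ nimg g (d+1) := by
  classical
  rw [nimg, ← image_trunc g d]
  exact Finset.card_image_le

open Classical in
lemma stab_of_nimg_eq [Fintype V] (g : FinGraph V A) (d : ℕ)
    (h : nimg g (d+1) ≤ nimg g d) :
    ∀ u v : V, g.ut d u = g.ut d v → g.ut (d+1) u = g.ut (d+1) v := by
  classical
  have hcard : ((Finset.univ.image (g.ut (d+1))).image (trunc d)).card
      = (Finset.univ.image (g.ut (d+1))).card := by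
    have h1 : ((Finset.univ.image (g.ut (d+1))).image (trunc d)).card
        ≤ (Finset.univ.image (g.ut (d+1))).card := Finset.card_image_le
    have h2 := image_trunc g d
    unfold nimg at h
    rw [← h2] at h
    exact le_antisymm h1 h
  have hinj := Finset.card_image_iff.mp hcard
  intro u v huv
  have hu : g.ut (d+1) u ∈ (Finset.univ.image (g.ut (d+1)) : Finset (UT A (d+1))) :=
    Finset.mem_image_of_mem _ (Finset.mem_univ u)
  have hv : g.ut (d+1) v ∈ (Finset.univ.image (g.ut (d+1)) : Finset (UT A (d+1))) :=
    Finset.mem_image_of_mem _ (Finset.mem_univ v)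
  refine hinj hu hv ?_
  rw [trunc_ut, trunc_ut]
  exact huv

lemma nimg_growth [Fintype V] [Nonempty V] (g : FinGraph V A) :
    ∀ m : ℕ, (∀ k < m, ¬ ∀ u v : V, g.ut k u = g.ut k v → g.ut (k+1) u = g.ut (k+1) v) →
    m + 1 ≤ nimg g m := by
  intro m
  induction m with
  | zero =>
      intro _
      classical
      have : (Finset.univ : Finset V).Nonempty := Finset.univ_nonempty
      have := Finset.Nonempty.image this (g.ut 0)
      have h1 := Finset.card_pos.mpr this
      exact h1
  | succ m ih =>
      intro h
      have hm := ih (fun k hk => h k (Nat.lt_succ_of_lt hk))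
      have hlast := h m (Nat.lt_succ_self m)
      have hlt : nimg g m < nimg g (m+1) := by
        rcases Nat.lt_or_ge (nimg g m) (nimg g (m+1)) with h' | h'
        · exact h'
        · exact absurd (stab_of_nimg_eq g m h') hlast
      omega

lemma stable_all (g : FinGraph V A) (e : ℕ)
    (H : ∀ u v : V, g.ut e u = g.ut e v → g.ut (e+1) u = g.ut (e+1) v)
    (u v : V) (h : g.ut e u = g.ut e v) :
    ∀ k, g.ut (e+k) u = g.ut (e+k) v := by
  intro k
  induction k with
  | zero => exact h
  | succ k ih => exact step_stable g e H k u v ih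

/-- Disjoint union of two graphs. -/
def glue {V1 V2 : Type} (g1 : FinGraph V1 A) (g2 : FinGraph V2 A) : FinGraph (V1 ⊕ V2) A where
  nbr := Sum.elim (fun v => (g1.nbr v).map ⟨Sum.inl, Sum.inl_injective⟩)
    (fun v => (g2.nbr v).map ⟨Sum.inr, Sum.inr_injective⟩)
  attr := Sum.elim g1.attr g2.attr
  eattr := fun u w => match u, w with
    | .inl a, .inl b => g1.eattr a b
    | .inr a, .inr b => g2.eattr a b
    | .inl a, .inr _ => g1.attr a
    | .inr a, .inl _ => g2.attr a

lemma glue_ut_inl {V1 V2 : Type} (g1 : FinGraph V1 A) (g2 : FinGraph V2 A) :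
    ∀ (d : ℕ) (v : V1), (glue g1 g2).ut d (Sum.inl v) = g1.ut d v := by
  intro d
  induction d with
  | zero => intro v; rfl
  | succ d ih =>
      intro v
      show (g1.attr v, Multiset.map _ ((g1.nbr v).map ⟨Sum.inl, Sum.inl_injective⟩).val)
          = (g1.attr v, _)
      rw [Finset.map_val, Multiset.map_map]
      refine congrArg (Prod.mk _) (Multiset.map_congr rfl ?_)
      intro w _
      show ((glue g1 g2).eattr (Sum.inl v) (Sum.inl w), (glue g1 g2).ut d (Sum.inl w)) = _
      rw [ih w]
      rfl

lemma glue_ut_inr {V1 V2 : Type} (g1 : FinGraph V1 A) (g2 : FinGraph V2 A) :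
    ∀ (d : ℕ) (v : V2), (glue g1 g2).ut d (Sum.inr v) = g2.ut d v := by
  intro d
  induction d with
  | zero => intro v; rfl
  | succ d ih =>
      intro v
      show (g2.attr v, Multiset.map _ ((g2.nbr v).map ⟨Sum.inr, Sum.inr_injective⟩).val)
          = (g2.attr v, _)
      rw [Finset.map_val, Multiset.map_map]
      refine congrArg (Prod.mk _) (Multiset.map_congr rfl ?_)
      intro w _
      show ((glue g1 g2).eattr (Sum.inr v) (Sum.inr w), (glue g1 g2).ut d (Sum.inr w)) = _
      rw [ih w]
      rfl

end UTAux

/-- **Unfolding tree depth bound**: for nodes `x`, `y` of (possibly disconnected)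
graphs with at most `N` nodes each, the infinite unfolding trees agree iff the
depth-`(2N-1)` unfolding trees agree. -/


theorem ut_eq_iff_ut_depth_eq {V1 V2 A : Type} [Fintype V1] [Fintype V2]
    (g1 : FinGraph V1 A) (g2 : FinGraph V2 A)
    (hg1 : g1.Undirected) (hg2 : g2.Undirected)
    (N : ℕ) (hN1 : Fintype.card V1 ≤ N) (hN2 : Fintype.card V2 ≤ N)
    (x : V1) (y : V2) :
    (∀ d : ℕ, g1.ut d x = g2.ut d y) ↔ g1.ut (2*N - 1) x = g2.ut (2*N - 1) y := by
  constructor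
  · intro h; exact h _
  · intro h d
    set G := UTAux.glue g1 g2 with hG
    have hx : ∀ k, G.ut k (Sum.inl x) = g1.ut k x := fun k => UTAux.glue_ut_inl g1 g2 k x
    have hy : ∀ k, G.ut k (Sum.inr y) = g2.ut k y := fun k => UTAux.glue_ut_inr g1 g2 k y
    have hN : 1 ≤ N := le_trans (Fintype.card_pos_iff.mpr ⟨x⟩) hN1
    set M := 2*N - 1 with hM
    have hne : Nonempty (V1 ⊕ V2) := ⟨Sum.inl x⟩
    have hMcard : Fintype.card (V1 ⊕ V2) ≤ M + 1 := by
      rw [Fintype.card_sum]; omega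
    have hex : ∃ e, e ≤ M ∧ ∀ u v : V1 ⊕ V2,
        G.ut e u = G.ut e v → G.ut (e+1) u = G.ut (e+1) v := by
      by_contra hc
      rw [not_exists] at hc
      have hgrow := UTAux.nimg_growth G (M+1)
        (fun k hk hs => hc k ⟨Nat.lt_succ_iff.mp hk, hs⟩)
      have hle := UTAux.nimg_le_card G (M+1)
      omega
    obtain ⟨e, heM, hstab⟩ := hex
    have h' : G.ut M (Sum.inl x) = G.ut M (Sum.inr y) := by rw [hx, hy]; exact h
    rcases le_or_gt d M with hd | hd
    · rw [← hx d, ← hy d]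
      exact UTAux.ut_mono G hd h'
    · have he' : G.ut e (Sum.inl x) = G.ut e (Sum.inr y) := UTAux.ut_mono G heM h'
      have hde : e + (d - e) = d := by omega
      rw [← hx d, ← hy d, ← hde]
      exact UTAux.stable_all G e hstab _ _ he' (d - e)
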